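/- Let F be a field of characteristic zero with algebraic closure F̄, and let A be an F-subspace of M_n(F) of dimension n−1. Suppose there exist a nonzero vector x₁ ∈ F̄^n and linear functionals λ₁, ..., λ_{n−1} on F̄^n with λ_j(x₁) = 0 for all j, such that the rank-one matrices x₁⊗λ₁, ..., x₁⊗λ_{n−1} (where (x⊗λ)(z) = λ(z)x, i.e., the matrix with (i,j) entry (x)_i λ(e_j)) are linearly independent over F̄ and span the F̄-span of the image of A in M_n(F̄) under the entrywise embedding F → F̄. Then A is F-conjugate to the span of the matrices E_{n,i}, i = 1, ..., n−1: there exists g ∈ GL(n,F) such that g A g^{-1} equals the F-span of {E_{n,1}, ..., E_{n,n-1}}. -/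

import Mathlib

/-!
Over `F̄` every element of `A` is `x ⊗ μ` with `μ(x) = 0`, `μ` a combination of the `λⱼ`.
A nonzero `a₀ ∈ A` has a nonzero column `v ∈ Fⁿ`, which is a multiple of `x`; dividing a row of
any `a ∈ A` by the matching entry of `v` shows `a = v ⊗ w` with `w ∈ Fⁿ` and `w ⬝ v = 0`.
Conjugating by `g ∈ GL(n, F)` with `g v = eₙ` sends `a` to `eₙ ⊗ w g⁻¹`, whose last entry
vanishes, so `g A g⁻¹` lies in the span of the `E_{n,i}`, `i < n`, and the dimensions agree.
-/

open Matrix Module Submodule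

theorem LinearMap.apply_eq_dotProduct {K n : Type*} [CommSemiring K] [Fintype n] [DecidableEq n]
    (f : (n → K) →ₗ[K] K) (z : n → K) : f z = (fun k => f (Pi.single k 1)) ⬝ᵥ z := by
  conv_lhs => rw [pi_eq_sum_univ' z]
  simp [dotProduct, mul_comm]

namespace Matrix

section RankOne

variable {F K n : Type*} [Fintype n]

theorem exists_eq_vecMulVec_of_mem_span [CommSemiring K] {ι : Type*} {x : n → K}
    {r : ι → n → K} (hr : ∀ j, r j ⬝ᵥ x = 0) {M : Matrix n n K}
    (hM : M ∈ span K (Set.range fun j => vecMulVec x (r j))) :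
    ∃ s, M = vecMulVec x s ∧ s ⬝ᵥ x = 0 := by
  induction hM using Submodule.span_induction with
  | mem _ h =>
    obtain ⟨j, rfl⟩ := h
    exact ⟨r j, rfl, hr j⟩
  | zero => exact ⟨0, (vecMulVec_zero x).symm, zero_dotProduct x⟩
  | add _ _ _ _ h₁ h₂ =>
    obtain ⟨s₁, rfl, hs₁⟩ := h₁
    obtain ⟨s₂, rfl, hs₂⟩ := h₂
    exact ⟨s₁ + s₂, (vecMulVec_add _ _ _).symm, by rw [add_dotProduct, hs₁, hs₂, add_zero]⟩
  | smul c _ _ h =>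
    obtain ⟨s, rfl, hs⟩ := h
    exact ⟨c • s, (vecMulVec_smul _ _ _).symm, by rw [smul_dotProduct, hs, smul_zero]⟩

variable [Field F] [Field K] (φ : F →+* K)

theorem exists_eq_vecMulVec_of_map_eq {a : Matrix n n F} {v : n → F} (hv : v ≠ 0) {s : n → K}
    (ha : a.map φ = vecMulVec (φ ∘ v) s) (hs : s ⬝ᵥ (φ ∘ v) = 0) :
    ∃ w, a = vecMulVec v w ∧ w ⬝ᵥ v = 0 := by
  obtain ⟨i, hi⟩ : ∃ i, v i ≠ 0 := Function.ne_iff.mp hv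
  set w := fun k => a i k / v i
  have hw : φ ∘ w = s := by
    funext k
    have hik : φ (a i k) = φ (v i) * s k := congrFun₂ ha i k
    simp [w, hik, hi]
  refine ⟨w, map_injective φ.injective ?_, φ.injective ?_⟩
  · change a.map φ = (vecMulVec v w).map φ
    rw [ha, ← hw]
    ext
    simp [vecMulVec_apply]
  · rw [RingHom.map_dotProduct, hw, hs, map_zero]

theorem exists_forall_eq_vecMulVec_of_forall_map_eq [Nonempty n] (x : n → K)
    {S : Set (Matrix n n F)} (hS : ∀ a ∈ S, ∃ r, a.map φ = vecMulVec x r ∧ r ⬝ᵥ x = 0) :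
    ∃ v : n → F, v ≠ 0 ∧ ∀ a ∈ S, ∃ w, a = vecMulVec v w ∧ w ⬝ᵥ v = 0 := by
  classical
  by_cases hzero : ∀ a ∈ S, a = 0
  · obtain ⟨i⟩ := ‹Nonempty n›
    refine ⟨Pi.single i 1, by simp, fun a ha => ⟨0, ?_, zero_dotProduct _⟩⟩
    rw [hzero a ha, vecMulVec_zero]
  push Not at hzero
  obtain ⟨a₀, ha₀, hne⟩ := hzero
  obtain ⟨i, k, hik⟩ : ∃ i k, a₀ i k ≠ 0 := by
    by_contra! h
    exact hne (ext h)
  obtain ⟨r₀, hr₀, -⟩ := hS a₀ ha₀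
  set v := fun j => a₀ j k
  have hv : v ≠ 0 := Function.ne_iff.mpr ⟨i, hik⟩
  have hφv : φ ∘ v = r₀ k • x := by
    funext j
    simpa [v, vecMulVec_apply, mul_comm] using congrFun₂ hr₀ j k
  have hc : r₀ k ≠ 0 := by
    intro h
    apply hik
    apply φ.injective
    simpa [h, vecMulVec_apply] using congrFun₂ hr₀ i k
  refine ⟨v, hv, fun a ha => ?_⟩
  obtain ⟨r, hr, hrx⟩ := hS a ha
  refine exists_eq_vecMulVec_of_map_eq φ hv (s := (r₀ k)⁻¹ • r) ?_ ?_
  · rw [hr, hφv, smul_vecMulVec, vecMulVec_smul, smul_smul, mul_inv_cancel₀ hc, one_smul]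
  · rw [hφv, smul_dotProduct, dotProduct_smul, hrx, smul_zero, smul_zero]

end RankOne

section Units

variable {R n : Type*} [Fintype n] [DecidableEq n]

theorem vecMul_inv_dotProduct_mulVec [CommRing R] (g : (Matrix n n R)ˣ) (w v : n → R) :
    (w ᵥ* (↑g⁻¹ : Matrix n n R)) ⬝ᵥ ((g : Matrix n n R) *ᵥ v) = w ⬝ᵥ v := by
  rw [dotProduct_mulVec, vecMul_vecMul, Units.inv_mul, vecMul_one]

theorem exists_units_mulVec_eq [Field R] {v w : n → R} (hv : v ≠ 0) (hw : w ≠ 0) :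
    ∃ g : (Matrix n n R)ˣ, (g : Matrix n n R) *ᵥ v = w := by
  obtain ⟨u, hu⟩ := Submodule.exists_linearEquiv_restrict_eq
    ((LinearEquiv.toSpanNonzeroSingleton R _ v hv).symm ≪≫ₗ
      LinearEquiv.toSpanNonzeroSingleton R _ w hw)
  refine ⟨GeneralLinearGroup.toLin.symm (LinearMap.GeneralLinearGroup.ofLinearEquiv u), ?_⟩
  have huv := hu (LinearEquiv.toSpanNonzeroSingleton R _ v hv 1)
  rw [LinearEquiv.trans_apply, LinearEquiv.symm_apply_apply,
    LinearEquiv.toSpanNonzeroSingleton_one, LinearEquiv.toSpanNonzeroSingleton_one] at huv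
  rw [← mulVecLin_apply, ← GeneralLinearGroup.toLin_apply, MulEquiv.apply_symm_apply,
    LinearMap.GeneralLinearGroup.coe_ofLinearEquiv, ← huv]

theorem vecMulVec_single_one_eq_sum [CommSemiring R] (i : n) (w : n → R) :
    vecMulVec (Pi.single i 1) w = ∑ j, w j • single i j 1 := by
  ext k l
  by_cases hk : i = k <;> simp [vecMulVec_apply, Matrix.sum_apply, single_apply, hk, Ne.symm]

end Units

theorem vecMulVec_single_last_mem_span {R : Type*} [CommSemiring R] {m : ℕ}
    {w : Fin (m + 1) → R} (hw : w (Fin.last m) = 0) :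
    vecMulVec (Pi.single (Fin.last m) 1) w ∈
      span R (Set.range fun i : Fin m => single (Fin.last m) i.castSucc (1 : R)) := by
  rw [vecMulVec_single_one_eq_sum, Fin.sum_univ_castSucc, hw, zero_smul, add_zero]
  exact sum_mem fun i _ => smul_mem _ _ (subset_span ⟨i, rfl⟩)

theorem finrank_span_single_last {R : Type*} [Field R] (m : ℕ) :
    finrank R (span R (Set.range fun i : Fin m => single (Fin.last m) i.castSucc (1 : R))) = m := by
  have hinj : Function.Injective fun i : Fin m => (Fin.last m, i.castSucc) :=
    fun i j hij => Fin.castSucc_injective m (congrArg Prod.snd hij)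
  have hind := (stdBasis R (Fin (m + 1)) (Fin (m + 1))).linearIndependent.comp _ hinj
  simp only [Function.comp_def, stdBasis_eq_single] at hind
  rw [finrank_span_eq_card hind, Fintype.card_fin]

theorem exists_conj_eq_span_single_last {F : Type*} [Field F] {m : ℕ}
    (A : Submodule F (Matrix (Fin (m + 1)) (Fin (m + 1)) F)) (hdim : finrank F A = m)
    {v : Fin (m + 1) → F} (hv : v ≠ 0) (hA : ∀ a ∈ A, ∃ w, a = vecMulVec v w ∧ w ⬝ᵥ v = 0) :
    ∃ g : (Matrix (Fin (m + 1)) (Fin (m + 1)) F)ˣ,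
      (fun a => (g : Matrix (Fin (m + 1)) (Fin (m + 1)) F) * a * (↑g⁻¹ : Matrix _ _ F)) ''
          (A : Set (Matrix (Fin (m + 1)) (Fin (m + 1)) F)) =
        ↑(span F (Set.range fun i : Fin m => single (Fin.last m) i.castSucc (1 : F))) := by
  obtain ⟨g, hg⟩ := exists_units_mulVec_eq (w := Pi.single (Fin.last m) 1) hv (by simp)
  let conj := (MulSemiringAction.toAlgEquiv F (Matrix (Fin (m + 1)) (Fin (m + 1)) F)
    (ConjAct.toConjAct g)).toLinearEquiv
  refine ⟨g, ?_⟩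
  suffices h : A.map conj.toLinearMap =
      span F (Set.range fun i : Fin m => single (Fin.last m) i.castSucc (1 : F)) by
    rw [← h, map_coe]
    rfl
  refine eq_of_le_of_finrank_eq ?_
    (by rw [LinearEquiv.finrank_map_eq, hdim, finrank_span_single_last])
  rintro _ ⟨a, ha, rfl⟩
  obtain ⟨w, rfl, hwv⟩ := hA a ha
  have hconj : conj (vecMulVec v w) = vecMulVec (g *ᵥ v) (w ᵥ* ↑g⁻¹) := by
    simp [conj, ConjAct.units_smul_def, mul_vecMulVec, vecMulVec_mul]
  change conj _ ∈ _
  rw [hconj, hg]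
  apply vecMulVec_single_last_mem_span
  rw [← vecMul_inv_dotProduct_mulVec g, hg, dotProduct_single, mul_one] at hwv
  exact hwv

end Matrix

/-- Wallach, case b: Let `A ⊆ Mₙ(F)` be an `F`-subspace of
dimension `n-1` whose `F̄`-span has a basis of rank-one matrices
`x₁⊗λ₁, …, x₁⊗λₙ₋₁` with `x₁ ≠ 0` and `λⱼ(x₁) = 0`.  Then `A` is `F`-conjugate
to the span of the matrices `E_{n,i}`, `i = 1, …, n-1`. -/
theorem stmt15 (F : Type*) [Field F] (n : ℕ) (hn : 0 < n)
    (A : Submodule F (Matrix (Fin n) (Fin n) F))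
    (hdim : Module.finrank F A = n - 1)
    (x : Fin n → AlgebraicClosure F)
    (lam : Fin (n - 1) → ((Fin n → AlgebraicClosure F) →ₗ[AlgebraicClosure F] AlgebraicClosure F))
    (hlam : ∀ j, lam j x = 0)
    (B : Fin (n - 1) → Matrix (Fin n) (Fin n) (AlgebraicClosure F))
    (hB : ∀ j, B j = Matrix.of fun i k => x i * lam j (Pi.single k 1))
    (hspan : Submodule.span (AlgebraicClosure F) (Set.range B)
        = Submodule.span (AlgebraicClosure F)
            ((fun M : Matrix (Fin n) (Fin n) F =>
              M.map (algebraMap F (AlgebraicClosure F))) '' (A : Set (Matrix (Fin n) (Fin n) F)))) :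
    ∃ g : (Matrix (Fin n) (Fin n) F)ˣ,
      (fun a => (↑g : Matrix (Fin n) (Fin n) F) * a * (↑g⁻¹ : Matrix (Fin n) (Fin n) F)) ''
          (A : Set (Matrix (Fin n) (Fin n) F))
        = ↑(Submodule.span F (Set.range fun i : Fin (n - 1) =>
            Matrix.single (⟨n - 1, by omega⟩ : Fin n) (Fin.castLE (Nat.sub_le n 1) i) (1 : F))) := by
  obtain ⟨m, rfl⟩ : ∃ m, n = m + 1 := ⟨n - 1, by omega⟩
  have hB_vecMulVec : B = fun j => vecMulVec x fun k => lam j (Pi.single k 1) := funext hB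
  have hrank : ∀ a ∈ A, ∃ r, a.map (algebraMap F (AlgebraicClosure F)) = vecMulVec x r ∧
      r ⬝ᵥ x = 0 := by
    intro a ha
    refine exists_eq_vecMulVec_of_mem_span (r := fun j k => lam j (Pi.single k 1))
      (fun j => ?_) ?_
    · rw [← LinearMap.apply_eq_dotProduct, hlam]
    · rw [← hB_vecMulVec, hspan]
      exact subset_span ⟨a, ha, rfl⟩
  obtain ⟨v, hv, hA⟩ := exists_forall_eq_vecMulVec_of_forall_map_eq _ x hrank
  -- `m + 1 - 1` reduces to `m`, so `⟨m + 1 - 1, _⟩` is `Fin.last m` and `Fin.castLE` is `castSucc`.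
  exact exists_conj_eq_span_single_last A hdim hv hA
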